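/- Let u : [0,R] → ℝ be a C² positive solution of u''(r) + ((N-1)/r) u'(r) = (1/σ⁴) b(r) u(r) on (0,R] with u(0) = α > 0, u'(0) = 0, where b is continuous, nonnegative and nondecreasing. Then u''(r) ≥ (1/(N σ⁴)) b(r) u(r) ≥ 0 for all r ∈ (0,R]; in particular u is convex on [0,R]. -/

import Mathlib

/-!
Multiplied by `r ^ (N - 1)`, the equation reads `(r ^ (N - 1) u')' = σ⁻⁴ r ^ (N - 1) b u ≥ 0`, so
the flux `r ^ (N - 1) u'` is nondecreasing, from `0` at `r = 0` when `N ≥ 2` (for `N = 1` the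
equation is already the claim). Hence `u' ≥ 0`, so `u` and with it `b u` are nondecreasing. Comparing the flux with `σ⁻⁴ b(r) u(r) s ^ N / N` on `[0, r]`
gives `u'(r) / r ≤ b(r) u(r) / (N σ⁴)`, and substituting this into the equation bounds `u''` below.
-/

open Set Topology

theorem monotoneOn_Icc_of_hasDerivAt_nonneg {f f' : ℝ → ℝ} {a b : ℝ}
    (hf : ContinuousOn f (Icc a b)) (hf' : ∀ x ∈ Ioo a b, HasDerivAt f (f' x) x)
    (hf'₀ : ∀ x ∈ Ioo a b, 0 ≤ f' x) : MonotoneOn f (Icc a b) :=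
  monotoneOn_of_hasDerivWithinAt_nonneg (convex_Icc a b) hf
    (by simpa using fun x hx => (hf' x hx).hasDerivWithinAt) (by simpa using hf'₀)

theorem ContDiffOn.hasDerivAt_of_mem_Ioo {u : ℝ → ℝ} {a b x : ℝ}
    (hu : ContDiffOn ℝ 1 u (Icc a b)) (hx : x ∈ Ioo a b) :
    HasDerivAt u (derivWithin u (Icc a b) x) x := by
  have hnhds : Icc a b ∈ 𝓝 x := Icc_mem_nhds hx.1 hx.2
  rw [derivWithin_of_mem_nhds hnhds]
  exact ((hu.contDiffAt hnhds).differentiableAt one_ne_zero).hasDerivAt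

theorem ContDiffOn.hasDerivAt_derivWithin_of_mem_Ioo {u : ℝ → ℝ} {a b x : ℝ}
    (hu : ContDiffOn ℝ 2 u (Icc a b)) (hx : x ∈ Ioo a b) :
    HasDerivAt (derivWithin u (Icc a b)) (deriv (deriv u) x) x := by
  have hderiv : deriv u =ᶠ[𝓝 x] derivWithin u (Icc a b) := by
    filter_upwards [isOpen_Ioo.mem_nhds hx] with y hy
    exact (derivWithin_of_mem_nhds (Icc_mem_nhds hy.1 hy.2)).symm
  rw [hderiv.deriv_eq]
  have hv : ContDiffOn ℝ 1 (derivWithin u (Icc a b)) (Icc a b) :=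
    hu.derivWithin (uniqueDiffOn_Icc (hx.1.trans hx.2)) (by norm_num)
  exact (hv.hasDerivAt_of_mem_Ioo hx).differentiableAt.hasDerivAt

theorem deriv_le_of_derivWithin_le {u : ℝ → ℝ} {s : Set ℝ} {x C : ℝ}
    (hs : UniqueDiffWithinAt ℝ s x) (hC : 0 ≤ C) (h : derivWithin u s x ≤ C) : deriv u x ≤ C := by
  by_cases hu : DifferentiableAt ℝ u x
  · rwa [← hu.derivWithin hs]
  · rwa [deriv_zero_of_not_differentiableAt hu]

theorem hasDerivAt_pow_mul_radial (k : ℕ) {v : ℝ → ℝ} {w x : ℝ} (hv : HasDerivAt v w x)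
    (hx : x ≠ 0) : HasDerivAt (fun s => s ^ k * v s) (x ^ k * (w + k / x * v x)) x := by
  refine ((hasDerivAt_pow k x).fun_mul hv).congr_deriv ?_
  rcases k with _ | k
  · simp
  · rw [Nat.add_sub_cancel, pow_succ]
    field_simp
    ring

section Radial

variable {v w g : ℝ → ℝ} {k : ℕ} {R : ℝ}

theorem monotoneOn_pow_mul_of_radial (hv : ContinuousOn v (Icc 0 R))
    (hvw : ∀ x ∈ Ioo 0 R, HasDerivAt v (w x) x) (hode : ∀ x ∈ Ioo 0 R, w x + k / x * v x = g x)
    (hg : ∀ x ∈ Ioo 0 R, 0 ≤ g x) : MonotoneOn (fun s => s ^ k * v s) (Icc 0 R) :=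
  monotoneOn_Icc_of_hasDerivAt_nonneg ((continuous_pow k).continuousOn.mul hv)
    (fun x hx => hasDerivAt_pow_mul_radial k (hvw x hx) hx.1.ne') fun x hx => by
      rw [hode x hx]
      exact mul_nonneg (pow_nonneg hx.1.le k) (hg x hx)

theorem nonneg_of_radial (hv : ContinuousOn v (Icc 0 R))
    (hvw : ∀ x ∈ Ioo 0 R, HasDerivAt v (w x) x) (hode : ∀ x ∈ Ioo 0 R, w x + k / x * v x = g x)
    (hg : ∀ x ∈ Ioo 0 R, 0 ≤ g x) (hk : k ≠ 0) {r : ℝ} (hr : r ∈ Ioc 0 R) : 0 ≤ v r := by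
  have h := monotoneOn_pow_mul_of_radial hv hvw hode hg ⟨le_rfl, hr.1.le.trans hr.2⟩
    (Ioc_subset_Icc_self hr) hr.1.le
  simp only [zero_pow hk, zero_mul] at h
  exact (mul_nonneg_iff_of_pos_left (pow_pos hr.1 k)).1 h

theorem le_mul_div_of_radial (hv : ContinuousOn v (Icc 0 R))
    (hvw : ∀ x ∈ Ioo 0 R, HasDerivAt v (w x) x) (hode : ∀ x ∈ Ioo 0 R, w x + k / x * v x = g x)
    (hg : MonotoneOn g (Icc 0 R)) (hk : k ≠ 0) {r : ℝ} (hr : r ∈ Ioc 0 R) :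
    v r ≤ g r * r / (k + 1) := by
  have hsub : Ioo 0 r ⊆ Ioo 0 R := Ioo_subset_Ioo_right hr.2
  have hmono : MonotoneOn (fun s => g r * s ^ (k + 1) / (k + 1) - s ^ k * v s) (Icc 0 r) := by
    refine monotoneOn_Icc_of_hasDerivAt_nonneg ?_
      (fun x hx => (((hasDerivAt_pow (k + 1) x).const_mul (g r)).div_const _).sub
        (hasDerivAt_pow_mul_radial k (hvw x (hsub hx)) hx.1.ne')) fun x hx => ?_
    · exact (Continuous.continuousOn (by fun_prop)).sub
        ((continuous_pow k).continuousOn.mul (hv.mono (Icc_subset_Icc_right hr.2)))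
    · have hgx : g x ≤ g r := hg ⟨hx.1.le, hx.2.le.trans hr.2⟩ ⟨hr.1.le, hr.2⟩ hx.2.le
      rw [hode x (hsub hx)]
      push_cast
      field_simp
      nlinarith [pow_nonneg hx.1.le k]
  have h := hmono (left_mem_Icc.2 hr.1.le) (right_mem_Icc.2 hr.1.le) hr.1.le
  simp only [zero_pow hk, zero_pow k.succ_ne_zero, mul_zero, zero_mul, zero_div, sub_zero] at h
  have hrk := pow_pos hr.1 k
  rw [← mul_le_mul_iff_right₀ hrk]
  calc r ^ k * v r ≤ g r * r ^ (k + 1) / (k + 1) := by linarith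
    _ = r ^ k * (g r * r / (k + 1)) := by ring

theorem radial_deriv_le {u f : ℝ → ℝ} (hu : ContinuousOn u (Icc 0 R))
    (huv : ∀ x ∈ Ioo 0 R, HasDerivAt u (v x) x) (hv : ContinuousOn v (Icc 0 R))
    (hvw : ∀ x ∈ Ioo 0 R, HasDerivAt v (w x) x)
    (hode : ∀ x ∈ Ioo 0 R, w x + k / x * v x = f x * u x)
    (hf₀ : ∀ x ∈ Icc 0 R, 0 ≤ f x) (hf : MonotoneOn f (Icc 0 R))
    (hu₀ : ∀ x ∈ Icc 0 R, 0 < u x) (hk : k ≠ 0) {r : ℝ} (hr : r ∈ Ioc 0 R) :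
    v r ≤ f r * u r * r / (k + 1) := by
  have hfu₀ : ∀ x ∈ Icc 0 R, 0 ≤ f x * u x := fun x hx => mul_nonneg (hf₀ x hx) (hu₀ x hx).le
  have hu_mono : MonotoneOn u (Icc 0 R) :=
    monotoneOn_Icc_of_hasDerivAt_nonneg hu huv fun x hx =>
      nonneg_of_radial hv hvw hode (fun y hy => hfu₀ y (Ioo_subset_Icc_self hy)) hk
        (Ioo_subset_Ioc_self hx)
  exact le_mul_div_of_radial hv hvw hode
    (hf.mul hu_mono hf₀ fun x hx => (hu₀ x hx).le) hk hr

end Radial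

theorem ContDiffOn.convexOn_Icc_of_deriv_deriv_nonneg {u : ℝ → ℝ} {a b : ℝ}
    (hu : ContDiffOn ℝ 2 u (Icc a b)) (h : ∀ x ∈ Ioo a b, 0 ≤ deriv (deriv u) x) :
    ConvexOn ℝ (Icc a b) u := by
  refine convexOn_of_hasDerivWithinAt2_nonneg (f' := derivWithin u (Icc a b))
    (f'' := deriv (deriv u))
    (convex_Icc a b) hu.continuousOn ?_ ?_ ?_ <;> rw [interior_Icc]
  · exact fun x hx => ((hu.of_le one_le_two).hasDerivAt_of_mem_Ioo hx).hasDerivWithinAt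
  · exact fun x hx => (hu.hasDerivAt_derivWithin_of_mem_Ioo hx).hasDerivWithinAt
  · exact h

theorem le_deriv_deriv_of_radial {u f : ℝ → ℝ} {k : ℕ} {R : ℝ} (hR : 0 < R)
    (hu : ContDiffOn ℝ 2 u (Icc 0 R))
    (hode : ∀ r ∈ Ioc 0 R, deriv (deriv u) r + k / r * deriv u r = f r * u r)
    (hf₀ : ∀ x ∈ Icc 0 R, 0 ≤ f x) (hf : MonotoneOn f (Icc 0 R))
    (hu₀ : ∀ x ∈ Icc 0 R, 0 < u x) {r : ℝ} (hr : r ∈ Ioc 0 R) :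
    f r * u r / (k + 1) ≤ deriv (deriv u) r := by
  have hfu₀ : 0 ≤ f r * u r :=
    mul_nonneg (hf₀ r (Ioc_subset_Icc_self hr)) (hu₀ r (Ioc_subset_Icc_self hr)).le
  have hflux : k / r * deriv u r ≤ k / (k + 1) * (f r * u r) := by
    rcases eq_or_ne k 0 with rfl | hk
    · simp
    have hu' : ∀ x ∈ Ioo 0 R, HasDerivAt u (derivWithin u (Icc 0 R) x) x := fun x hx =>
      (hu.of_le one_le_two).hasDerivAt_of_mem_Ioo hx
    have hv : derivWithin u (Icc 0 R) r ≤ f r * u r * r / (k + 1) :=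
      radial_deriv_le hu.continuousOn hu' (hu.continuousOn_derivWithin (uniqueDiffOn_Icc hR)
        one_le_two) (fun x hx => hu.hasDerivAt_derivWithin_of_mem_Ioo hx)
        (fun x hx => (hu' x hx).deriv ▸ hode x (Ioo_subset_Ioc_self hx)) hf₀ hf hu₀ hk hr
    have hr₀ := hr.1
    -- at `r = R`, `deriv u r` may be the junk value `0` instead of the one-sided derivative
    calc k / r * deriv u r ≤ k / r * (f r * u r * r / (k + 1)) := by
          gcongr
          exact deriv_le_of_derivWithin_le (uniqueDiffOn_Icc hR r (Ioc_subset_Icc_self hr))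
            (by positivity) hv
      _ = k / (k + 1) * (f r * u r) := by field_simp
  calc f r * u r / (k + 1) = f r * u r - k / (k + 1) * (f r * u r) := by field_simp; ring
    _ ≤ deriv (deriv u) r := by linarith [hode r hr]

theorem stmt_3_general (N : ℕ) (hN : 1 ≤ N) (σ R : ℝ) (hR : 0 < R)
    (b u : ℝ → ℝ)
    (hb_nonneg : ∀ s, 0 ≤ b s) (hb_mono : Monotone b)
    (hu : ContDiffOn ℝ 2 u (Icc 0 R))
    (hupos : ∀ r ∈ Icc (0:ℝ) R, 0 < u r)
    (hODE : ∀ r ∈ Ioc (0:ℝ) R,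
      deriv (deriv u) r + ((N : ℝ) - 1) / r * deriv u r = 1 / σ ^ 4 * b r * u r) :
    (∀ r ∈ Ioc (0:ℝ) R,
        1 / ((N : ℝ) * σ ^ 4) * b r * u r ≤ deriv (deriv u) r ∧
        0 ≤ 1 / ((N : ℝ) * σ ^ 4) * b r * u r) ∧
      ConvexOn ℝ (Icc 0 R) u := by
  obtain ⟨k, rfl⟩ := Nat.exists_eq_add_of_le' hN
  have hcoef : ((k + 1 : ℕ) : ℝ) - 1 = k := by push_cast; ring
  have hlower : ∀ r ∈ Ioc 0 R, 1 / (((k + 1 : ℕ) : ℝ) * σ ^ 4) * b r * u r ≤ deriv (deriv u) r :=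
    fun r hr => by
      convert le_deriv_deriv_of_radial (f := fun s => 1 / σ ^ 4 * b s) hR hu
        (by simpa only [hcoef] using hODE) (fun x _ => by have := hb_nonneg x; positivity)
        (fun x _ y _ hxy => mul_le_mul_of_nonneg_left (hb_mono hxy) (by positivity)) hupos hr using 1
      rw [Nat.cast_succ, one_div, mul_inv]
      ring
  have hnonneg : ∀ r ∈ Icc 0 R, 0 ≤ 1 / (((k + 1 : ℕ) : ℝ) * σ ^ 4) * b r * u r := fun r hr => by
    have := hb_nonneg r; have := hupos r hr; positivity
  exact ⟨fun r hr => ⟨hlower r hr, hnonneg r (Ioc_subset_Icc_self hr)⟩,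
    hu.convexOn_Icc_of_deriv_deriv_nonneg fun x hx =>
      (hnonneg x (Ioo_subset_Icc_self hx)).trans (hlower x (Ioo_subset_Ioc_self hx))⟩

theorem stmt_3 (N : ℕ) (hN : 1 ≤ N) (σ R α : ℝ) (hσ : 0 < σ) (hR : 0 < R)
    (b u : ℝ → ℝ)
    (hb_cont : Continuous b) (hb_nonneg : ∀ s, 0 ≤ b s) (hb_mono : Monotone b)
    (hu : ContDiffOn ℝ 2 u (Icc 0 R))
    (hupos : ∀ r ∈ Icc (0:ℝ) R, 0 < u r)
    (hα : 0 < α) (hu0 : u 0 = α) (hu'0 : deriv u 0 = 0)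
    (hODE : ∀ r ∈ Ioc (0:ℝ) R,
      deriv (deriv u) r + ((N : ℝ) - 1) / r * deriv u r = 1 / σ ^ 4 * b r * u r) :
    (∀ r ∈ Ioc (0:ℝ) R,
        1 / ((N : ℝ) * σ ^ 4) * b r * u r ≤ deriv (deriv u) r ∧
        0 ≤ 1 / ((N : ℝ) * σ ^ 4) * b r * u r) ∧
      ConvexOn ℝ (Icc 0 R) u :=
  stmt_3_general N hN σ R hR b u hb_nonneg hb_mono hu hupos hODE
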